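/- Let A, B ∈ M_n. Then there exist unitary matrices U, V ∈ M_n such that |A + B| ≤ U|A|U* + V|B|V*. -/

import Mathlib

/-!
Polar decomposition gives a unitary `W` with `A + B = W |A + B|`, hence
`|A + B| = Re (W⁻¹A) + Re (W⁻¹B)` where `Re Y = (Y + Y*)/2`. For `Y = W⁻¹A` and every `x`,
`re ⟪x, (Re Y) x⟫ = re ⟪W x, A x⟫ ≤ ‖x‖ ‖A x‖ = ‖x‖ ‖|A| x‖`. Test this on a nonzero `x` lying both
in the span of the eigenvectors of `Re Y` for its `i + 1` largest eigenvalues and in the span of the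
eigenvectors of `|A|` for its `n - i` smallest ones (such an `x` exists by counting dimensions): it
gives `λᵢ(Re Y) ≤ λᵢ(|A|)` for the eigenvalues listed in decreasing order. The unitary `U` sending
an eigenbasis of `|A|` to one of `Re Y` then satisfies `Re Y ≤ U |A| U*`; likewise for `B`.
-/

open Matrix Set ComplexOrder

variable {m : Type*}

/-- The modulus `|X| = (XᴴX)^{1/2}` of a matrix. -/
noncomputable def matAbs [Fintype m] [DecidableEq m] (X : Matrix m m ℂ) : Matrix m m ℂ :=
  (Matrix.posSemidef_conjTranspose_mul_self X).1.eigenvectorUnitary.1 *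
    diagonal ((↑) ∘ (√·) ∘ (Matrix.posSemidef_conjTranspose_mul_self X).1.eigenvalues) *
    (star (Matrix.posSemidef_conjTranspose_mul_self X).1.eigenvectorUnitary : Matrix m m ℂ)

theorem matAbs_posSemidef [Fintype m] [DecidableEq m] (X : Matrix m m ℂ) :
    (matAbs X).PosSemidef := by
  unfold matAbs
  have hd : (diagonal ((↑) ∘ (√·) ∘
      (Matrix.posSemidef_conjTranspose_mul_self X).1.eigenvalues) : Matrix m m ℂ).PosSemidef := by
    rw [Matrix.posSemidef_diagonal_iff]
    intro i
    simp only [Function.comp_apply]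
    exact_mod_cast Real.sqrt_nonneg _
  exact hd.mul_mul_conjTranspose_same _

/-- Functional calculus: apply `f : ℝ → ℝ` to a Hermitian matrix via its spectral
decomposition (junk value `0` for non-Hermitian input). -/
noncomputable def matFun [Fintype m] [DecidableEq m] (f : ℝ → ℝ) (X : Matrix m m ℂ) :
    Matrix m m ℂ :=
  if h : X.IsHermitian then
    (h.eigenvectorUnitary : Matrix m m ℂ) *
      Matrix.diagonal (fun i => (f (h.eigenvalues i) : ℂ)) *
      star (h.eigenvectorUnitary : Matrix m m ℂ)
  else 0

/-- Real part `Re A = (A + Aᴴ)/2`. -/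
noncomputable def reM (A : Matrix m m ℂ) : Matrix m m ℂ := (1/2 : ℂ) • (A + Aᴴ)

/-- Imaginary part `Im A = (A - Aᴴ)/(2i)`. -/
noncomputable def imM (A : Matrix m m ℂ) : Matrix m m ℂ := (1/(2*Complex.I)) • (A - Aᴴ)

/-- Numerical range `W(A) = {x* A x : x*x = 1}`. -/
def numRange [Fintype m] (A : Matrix m m ℂ) : Set ℂ :=
  {z | ∃ x : m → ℂ, star x ⬝ᵥ x = 1 ∧ z = star x ⬝ᵥ A.mulVec x}

/-- The sector `S_α = {z : Re z ≥ 0, |Im z| ≤ (Re z) tan α}`. -/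
def sector (α : ℝ) : Set ℂ := {z | 0 ≤ z.re ∧ |z.im| ≤ z.re * Real.tan α}


open Module RCLike

theorem Module.Basis.exists_ne_zero_repr_eq_zero {K V : Type*} [Field K] [AddCommGroup V]
    [Module K V] {n : ℕ} (b c : Basis (Fin n) K V) (i : Fin n) :
    ∃ x ≠ 0, (∀ k, i < k → b.repr x k = 0) ∧ ∀ k, k < i → c.repr x k = 0 := by
  have : FiniteDimensional K V := b.finiteDimensional_of_finite
  let φ : V →ₗ[K] (Ioi i → K) × (Iio i → K) :=
    (LinearMap.pi fun k : Ioi i => b.coord k).prod (LinearMap.pi fun k : Iio i => c.coord k)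
  have hdim : finrank K ((Ioi i → K) × (Iio i → K)) < finrank K V := by
    simp only [finrank_prod, finrank_pi, Fintype.card_Ioi, Fintype.card_Iio, Fin.card_Ioi,
      Fin.card_Iio, finrank_eq_card_basis b, Fintype.card_fin]
    omega
  obtain ⟨x, hx, hx0⟩ :=
    (Submodule.ne_bot_iff _).mp (LinearMap.ker_ne_bot_of_finrank_lt (f := φ) hdim)
  rw [LinearMap.mem_ker] at hx
  refine ⟨x, hx0, fun k hk => ?_, fun k hk => ?_⟩
  · simpa [φ] using congr_fun (congr_arg Prod.fst hx) ⟨k, hk⟩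
  · simpa [φ] using congr_fun (congr_arg Prod.snd hx) ⟨k, hk⟩

namespace OrthonormalBasis

variable {𝕜 E ι : Type*} [RCLike 𝕜] [NormedAddCommGroup E] [InnerProductSpace 𝕜 E] [Fintype ι]
  (b : OrthonormalBasis ι 𝕜 E) {T : E →ₗ[𝕜] E} {μ : ι → ℝ}

theorem re_inner_apply_self_eq_sum (hT : ∀ x i, b.repr (T x) i = μ i * b.repr x i) (x : E) :
    re (inner 𝕜 x (T x)) = ∑ i, μ i * ‖b.repr x i‖ ^ 2 := by
  rw [← b.repr.inner_map_map, PiLp.inner_apply, map_sum]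
  refine Finset.sum_congr rfl fun i _ => ?_
  rw [hT, inner_apply, mul_assoc, mul_conj, ← ofReal_pow, ← ofReal_mul, ofReal_re]

theorem norm_apply_sq_eq_sum (hT : ∀ x i, b.repr (T x) i = μ i * b.repr x i) (x : E) :
    ‖T x‖ ^ 2 = ∑ i, μ i ^ 2 * ‖b.repr x i‖ ^ 2 := by
  rw [← b.repr.norm_map, EuclideanSpace.norm_sq_eq]
  simp only [hT, norm_mul, norm_ofReal, mul_pow, sq_abs]

theorem isPositive_of_apply_eq_smul [DecidableEq ι] (hT : ∀ i, T (b i) = (μ i : 𝕜) • b i)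
    (hμ : ∀ i, 0 ≤ μ i) : T.IsPositive := by
  have hdiag : T.toMatrix b.toBasis b.toBasis = diagonal fun i => (μ i : 𝕜) := by
    ext i j
    simp [LinearMap.toMatrix_apply, hT, diagonal_apply, real_smul_eq_coe_mul]
    grind
  rw [← LinearMap.posSemidef_toMatrix_iff b, hdiag, posSemidef_diagonal_iff]
  exact fun i => ofReal_nonneg.mpr (hμ i)

end OrthonormalBasis

namespace LinearMap

variable {𝕜 E : Type*} [RCLike 𝕜] [NormedAddCommGroup E] [InnerProductSpace 𝕜 E]
  [FiniteDimensional 𝕜 E]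

section Eigenvalues

variable {n : ℕ} (hn : finrank 𝕜 E = n)

theorem IsSymmetric.eigenvalues_mul_norm_sq_le_re_inner {T : E →ₗ[𝕜] E} (hT : T.IsSymmetric)
    {i : Fin n} {x : E} (hx : ∀ k, i < k → (hT.eigenvectorBasis hn).repr x k = 0) :
    hT.eigenvalues hn i * ‖x‖ ^ 2 ≤ re (inner 𝕜 x (T x)) := by
  set b := hT.eigenvectorBasis hn
  rw [b.re_inner_apply_self_eq_sum (hT.eigenvectorBasis_apply_self_apply hn),
    ← b.repr.norm_map, EuclideanSpace.norm_sq_eq, Finset.mul_sum]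
  refine Finset.sum_le_sum fun k _ => ?_
  rcases le_or_gt k i with hki | hik
  · exact mul_le_mul_of_nonneg_right (hT.eigenvalues_antitone hn hki) (sq_nonneg _)
  · simp [hx k hik]

theorem IsPositive.norm_apply_le {P : E →ₗ[𝕜] E} (hP : P.IsPositive)
    {i : Fin n} {x : E} (hx : ∀ k, k < i → (hP.isSymmetric.eigenvectorBasis hn).repr x k = 0) :
    ‖P x‖ ≤ hP.isSymmetric.eigenvalues hn i * ‖x‖ := by
  set b := hP.isSymmetric.eigenvectorBasis hn
  refine le_of_pow_le_pow_left₀ two_ne_zero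
    (mul_nonneg (hP.nonneg_eigenvalues hn i) (norm_nonneg x)) ?_
  rw [b.norm_apply_sq_eq_sum (hP.isSymmetric.eigenvectorBasis_apply_self_apply hn), mul_pow,
    ← b.repr.norm_map, EuclideanSpace.norm_sq_eq, Finset.mul_sum]
  refine Finset.sum_le_sum fun k _ => ?_
  rcases lt_or_ge k i with hki | hik
  · simp [hx k hki]
  · refine mul_le_mul_of_nonneg_right ?_ (sq_nonneg _)
    exact pow_le_pow_left₀ (hP.nonneg_eigenvalues hn k)
      (hP.isSymmetric.eigenvalues_antitone hn hik) 2

theorem IsSymmetric.eigenvalues_le_of_re_inner_le {T P : E →ₗ[𝕜] E} (hT : T.IsSymmetric)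
    (hP : P.IsPositive) (h : ∀ x, re (inner 𝕜 x (T x)) ≤ ‖x‖ * ‖P x‖) (i : Fin n) :
    hT.eigenvalues hn i ≤ hP.isSymmetric.eigenvalues hn i := by
  obtain ⟨x, hx0, hxT, hxP⟩ := Basis.exists_ne_zero_repr_eq_zero
    (hT.eigenvectorBasis hn).toBasis (hP.isSymmetric.eigenvectorBasis hn).toBasis i
  simp only [OrthonormalBasis.coe_toBasis_repr_apply] at hxT hxP
  have hx : 0 < ‖x‖ ^ 2 := by positivity
  refine le_of_mul_le_mul_right ?_ hx
  calc hT.eigenvalues hn i * ‖x‖ ^ 2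
      ≤ re (inner 𝕜 x (T x)) := hT.eigenvalues_mul_norm_sq_le_re_inner hn hxT
    _ ≤ ‖x‖ * ‖P x‖ := h x
    _ ≤ ‖x‖ * (hP.isSymmetric.eigenvalues hn i * ‖x‖) := by
      gcongr
      exact hP.norm_apply_le hn hxP
    _ = hP.isSymmetric.eigenvalues hn i * ‖x‖ ^ 2 := by ring

theorem IsSymmetric.exists_le_conj_of_eigenvalues_le {T S : E →ₗ[𝕜] E} (hT : T.IsSymmetric)
    (hS : S.IsSymmetric) (h : ∀ i, hT.eigenvalues hn i ≤ hS.eigenvalues hn i) :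
    ∃ V : E ≃ₗᵢ[𝕜] E, T ≤ V.toLinearEquiv.conj S := by
  set bT := hT.eigenvectorBasis hn
  set bS := hS.eigenvectorBasis hn
  refine ⟨bS.repr.trans bT.repr.symm, bT.isPositive_of_apply_eq_smul
    (μ := fun i => hS.eigenvalues hn i - hT.eigenvalues hn i) (fun i => ?_)
    (fun i => sub_nonneg.mpr (h i))⟩
  simp [LinearEquiv.conj_apply, bT, bS, sub_smul]

end Eigenvalues

theorem IsSymmetric.exists_le_conj_of_re_inner_le {T P : E →ₗ[𝕜] E} (hT : T.IsSymmetric)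
    (hP : P.IsPositive) (h : ∀ x, re (inner 𝕜 x (T x)) ≤ ‖x‖ * ‖P x‖) :
    ∃ V : E ≃ₗᵢ[𝕜] E, T ≤ V.toLinearEquiv.conj P :=
  hT.exists_le_conj_of_eigenvalues_le rfl hP.isSymmetric
    (hT.eigenvalues_le_of_re_inner_le rfl hP h)

theorem exists_linearIsometryEquiv_comp_eq {T P : E →ₗ[𝕜] E} (h : ∀ x, ‖T x‖ = ‖P x‖) :
    ∃ W : E ≃ₗᵢ[𝕜] E, W.toLinearMap ∘ₗ P = T := by
  have hker : ker P ≤ ker T := fun x hx =>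
    mem_ker.mpr (norm_eq_zero.mp ((h x).trans (norm_eq_zero.mpr (mem_ker.mp hx))))
  let L : range P →ₗ[𝕜] E := (ker P).liftQ T hker ∘ₗ P.quotKerEquivRange.symm.toLinearMap
  have hL : ∀ x, L ⟨P x, mem_range_self P x⟩ = T x := fun x => by
    simp [L, quotKerEquivRange_symm_apply_image]
  let L' : range P →ₗᵢ[𝕜] E := ⟨L, by rintro ⟨_, x, rfl⟩; simp [hL, h]⟩
  refine ⟨L'.extend.toLinearIsometryEquiv rfl, LinearMap.ext fun x => ?_⟩
  simpa using (L'.extend_apply ⟨P x, mem_range_self P x⟩).trans (hL x)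

theorem norm_apply_eq_of_adjoint_comp_self_eq {T P : E →ₗ[𝕜] E}
    (h : adjoint T ∘ₗ T = adjoint P ∘ₗ P) (x : E) : ‖T x‖ = ‖P x‖ := by
  rw [← sq_eq_sq₀ (norm_nonneg _) (norm_nonneg _), ← inner_self_eq_norm_sq (𝕜 := 𝕜),
    ← inner_self_eq_norm_sq (𝕜 := 𝕜), ← adjoint_inner_right, ← adjoint_inner_right (A := P),
    ← comp_apply, h, comp_apply]

noncomputable def hermitianPart (Y : E →ₗ[𝕜] E) : E →ₗ[𝕜] E := (2 : 𝕜)⁻¹ • (Y + adjoint Y)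

theorem isSymmetric_hermitianPart (Y : E →ₗ[𝕜] E) : (hermitianPart Y).IsSymmetric := by
  refine IsSymmetric.smul (by rw [map_inv₀, map_ofNat]) fun x y => ?_
  simp only [add_apply, inner_add_left, inner_add_right, adjoint_inner_left, adjoint_inner_right]
  ring

theorem re_inner_hermitianPart_apply (Y : E →ₗ[𝕜] E) (x : E) :
    re (inner 𝕜 x (hermitianPart Y x)) = re (inner 𝕜 x (Y x)) := by
  rw [hermitianPart, smul_apply, inner_smul_right, add_apply, inner_add_right,
    adjoint_inner_right, ← inner_conj_symm (Y x) x, add_conj]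
  simp

theorem hermitianPart_add (Y Z : E →ₗ[𝕜] E) :
    hermitianPart (Y + Z) = hermitianPart Y + hermitianPart Z := by
  simp only [hermitianPart, map_add, ← smul_add]
  abel_nf

theorem IsSymmetric.hermitianPart_eq {T : E →ₗ[𝕜] E} (hT : T.IsSymmetric) :
    hermitianPart T = T := by
  rw [hermitianPart, hT.adjoint_eq, ← two_smul 𝕜 T, smul_smul, inv_mul_cancel₀ two_ne_zero,
    one_smul]

theorem exists_le_conj_add_conj {T₁ T₂ P₁ P₂ P : E →ₗ[𝕜] E} (hP₁ : P₁.IsPositive)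
    (hP₂ : P₂.IsPositive) (hP : P.IsSymmetric) (h₁ : ∀ x, ‖T₁ x‖ = ‖P₁ x‖)
    (h₂ : ∀ x, ‖T₂ x‖ = ‖P₂ x‖) (h : ∀ x, ‖(T₁ + T₂) x‖ = ‖P x‖) :
    ∃ U V : E ≃ₗᵢ[𝕜] E, P ≤ U.toLinearEquiv.conj P₁ + V.toLinearEquiv.conj P₂ := by
  obtain ⟨W, hW⟩ := exists_linearIsometryEquiv_comp_eq h
  have hbound {T Q : E →ₗ[𝕜] E} (hTQ : ∀ x, ‖T x‖ = ‖Q x‖) (x : E) :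
      re (inner 𝕜 x (hermitianPart (W.symm.toLinearMap ∘ₗ T) x)) ≤ ‖x‖ * ‖Q x‖ := by
    rw [re_inner_hermitianPart_apply]
    simp only [comp_apply, LinearEquiv.coe_coe, LinearIsometryEquiv.coe_toLinearEquiv]
    rw [← W.inner_map_eq_flip, ← W.norm_map x, ← hTQ]
    exact (re_le_norm _).trans (norm_inner_le_norm _ _)
  obtain ⟨U, hU⟩ := (isSymmetric_hermitianPart _).exists_le_conj_of_re_inner_le hP₁ (hbound h₁)
  obtain ⟨V, hV⟩ := (isSymmetric_hermitianPart _).exists_le_conj_of_re_inner_le hP₂ (hbound h₂)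
  refine ⟨U, V, ?_⟩
  calc P = hermitianPart (W.symm.toLinearMap ∘ₗ (T₁ + T₂)) := by
        rw [← hW, ← comp_assoc]
        simpa using hP.hermitianPart_eq.symm
    _ = hermitianPart (W.symm.toLinearMap ∘ₗ T₁) + hermitianPart (W.symm.toLinearMap ∘ₗ T₂) := by
        rw [comp_add, hermitianPart_add]
    _ ≤ U.toLinearEquiv.conj P₁ + V.toLinearEquiv.conj P₂ := add_le_add hU hV

end LinearMap

theorem Matrix.exists_mem_unitaryGroup_toEuclideanLin_conj {𝕜 ι : Type*} [RCLike 𝕜] [Fintype ι]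
    [DecidableEq ι] (V : EuclideanSpace 𝕜 ι ≃ₗᵢ[𝕜] EuclideanSpace 𝕜 ι) :
    ∃ U ∈ unitaryGroup ι 𝕜, ∀ M : Matrix ι ι 𝕜,
      toEuclideanLin (U * M * Uᴴ) = V.toLinearEquiv.conj (toEuclideanLin M) := by
  set U := toEuclideanLin.symm V.toLinearMap
  have hU : toEuclideanLin U = V.toLinearMap := toEuclideanLin.apply_symm_apply _
  have hUh : toEuclideanLin Uᴴ = V.symm.toLinearMap := by
    rw [toEuclideanLin_conjTranspose_eq_adjoint, hU, V.adjoint_toLinearMap_eq_symm]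
  refine ⟨U, mem_unitaryGroup_iff'.mpr (toEuclideanLin.injective ?_), fun M => ?_⟩
  · simp [star_eq_conjTranspose, hU, hUh]
  · simp [hU, hUh, LinearEquiv.conj_apply]

theorem matAbs_mul_self {ι : Type*} [Fintype ι] [DecidableEq ι] (X : Matrix ι ι ℂ) :
    matAbs X * matAbs X = Xᴴ * X := by
  set hX := (posSemidef_conjTranspose_mul_self X).1
  have hconj : matAbs X = Unitary.conjStarAlgAut ℂ _ hX.eigenvectorUnitary
      (diagonal ((↑) ∘ (√·) ∘ hX.eigenvalues)) := by
    rw [Unitary.conjStarAlgAut_apply]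
    rfl
  have hsqrt : diagonal (((↑) ∘ (√·) ∘ hX.eigenvalues : ι → ℂ)) *
      diagonal ((↑) ∘ (√·) ∘ hX.eigenvalues) = diagonal (RCLike.ofReal ∘ hX.eigenvalues) := by
    rw [diagonal_mul_diagonal]
    congr 1
    funext i
    simp [← Complex.ofReal_mul,
      Real.mul_self_sqrt ((posSemidef_conjTranspose_mul_self X).eigenvalues_nonneg i)]
  rw [hconj, ← map_mul, hsqrt, ← hX.spectral_theorem]

theorem norm_toEuclideanLin_apply_eq_matAbs {ι : Type*} [Fintype ι] [DecidableEq ι]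
    (X : Matrix ι ι ℂ) (x : EuclideanSpace ℂ ι) :
    ‖toEuclideanLin X x‖ = ‖toEuclideanLin (matAbs X) x‖ := by
  refine LinearMap.norm_apply_eq_of_adjoint_comp_self_eq ?_ x
  rw [← toEuclideanLin_conjTranspose_eq_adjoint, ← toEuclideanLin_conjTranspose_eq_adjoint,
    (matAbs_posSemidef X).1.eq, ← toLpLin_mul_same, ← toLpLin_mul_same, matAbs_mul_self]

theorem abs_add_le_unitary_conj {n : ℕ} (A B : Matrix (Fin n) (Fin n) ℂ) :
    ∃ U ∈ Matrix.unitaryGroup (Fin n) ℂ, ∃ V ∈ Matrix.unitaryGroup (Fin n) ℂ,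
      (U * matAbs A * Uᴴ + V * matAbs B * Vᴴ - matAbs (A + B)).PosSemidef := by
  obtain ⟨U, V, hUV⟩ := LinearMap.exists_le_conj_add_conj
    (isPositive_toEuclideanLin_iff.mpr (matAbs_posSemidef A))
    (isPositive_toEuclideanLin_iff.mpr (matAbs_posSemidef B))
    (isPositive_toEuclideanLin_iff.mpr (matAbs_posSemidef (A + B))).isSymmetric
    (norm_toEuclideanLin_apply_eq_matAbs A) (norm_toEuclideanLin_apply_eq_matAbs B)
    (by simpa only [map_add] using norm_toEuclideanLin_apply_eq_matAbs (A + B))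
  obtain ⟨U', hU', hU⟩ := exists_mem_unitaryGroup_toEuclideanLin_conj U
  obtain ⟨V', hV', hV⟩ := exists_mem_unitaryGroup_toEuclideanLin_conj V
  refine ⟨U', hU', V', hV', ?_⟩
  rw [← isPositive_toEuclideanLin_iff, map_sub, map_add, hU, hV]
  exact hUV
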